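/- Let S be a non-trivial IGal-invariant equivalence relation on ℝ⁴ whose equivalence classes are connected subsets of ℝ⁴. Then the equivalence classes of S are exactly the hyperplanes Σ_t of constant time; i.e., S(p,q) if and only if p and q have equal time coordinate. -/

import Mathlib

/-- The action of an inhomogeneous Galilei group element `(R, v, a, b)` on
spacetime `ℝ × ℝ³`: `(t, x) ↦ (t + b, R x + t v + a)`. -/
def galAct (R : Matrix (Fin 3) (Fin 3) ℝ) (v a : Fin 3 → ℝ) (b : ℝ) :
    ℝ × (Fin 3 → ℝ) → ℝ × (Fin 3 → ℝ) :=
  fun p => (p.1 + b, R.mulVec p.2 + p.1 • v + a)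

/-!
Translation invariance makes `S` the coset relation of the class `H` of the origin, an additive
subgroup of spacetime that is connected and invariant under boosts and rotations. Everything rests
on one fact: a connected subgroup of `ℝ` with a nonzero element is all of `ℝ`. If `H` contained an
event at nonzero time, boosts would put the whole hyperplane `{0} × ℝ³` into `H`, and the connected
time projection of `H` would then give all of spacetime. Hence `H ⊆ {0} × ℝ³`. There, adding to a
vector its half-turn about a coordinate axis leaves twice its component along that axis, and even
permutation matrices move such a vector to every axis; so the connected coordinate projections of
`H` are all of `ℝ`, and `H` contains every vector of `ℝ³`.
-/

open Matrix Equiv Topology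

namespace Setoid

variable {G : Type*} [AddCommGroup G] (S : Setoid G)
  (hS : ∀ a p q, S.r p q → S.r (p + a) (q + a))

def zeroClass : AddSubgroup G where
  carrier := {d | S.r 0 d}
  zero_mem' := S.refl 0
  add_mem' {a b} ha hb := S.trans ha (by simpa [add_comm] using hS a 0 b hb)
  neg_mem' {a} ha := S.symm (by simpa using hS (-a) 0 a ha)

@[simp]
theorem mem_zeroClass {d : G} : d ∈ zeroClass S hS ↔ S.r 0 d :=
  Iff.rfl

theorem rel_iff_sub_mem_zeroClass {p q : G} : S.r p q ↔ q - p ∈ zeroClass S hS := by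
  rw [mem_zeroClass]
  exact ⟨fun h => by simpa [sub_eq_add_neg] using hS (-p) p q h,
    fun h => by simpa using hS p 0 (q - p) h⟩

theorem map_mem_zeroClass {f : G → G} (hf0 : f 0 = 0) (hf : ∀ p q, S.r p q → S.r (f p) (f q))
    {d : G} (hd : d ∈ zeroClass S hS) : f d ∈ zeroClass S hS := by
  simpa [hf0] using hf 0 d hd

end Setoid

section Rotations

variable {ι : Type*} [Fintype ι] [DecidableEq ι]

def halfTurn (i : ι) : Matrix ι ι ℝ :=
  diagonal fun j => if j = i then 1 else -1

theorem halfTurn_mem_specialOrthogonalGroup (i : Fin 3) :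
    halfTurn i ∈ specialOrthogonalGroup (Fin 3) ℝ := by
  refine (mem_specialOrthogonalGroup_iff).2 ⟨?_, ?_⟩
  · rw [mem_orthogonalGroup_iff, halfTurn, diagonal_transpose, diagonal_mul_diagonal]
    convert diagonal_one with j
    split_ifs <;> norm_num
  · fin_cases i <;> simp [halfTurn, det_diagonal, Fin.prod_univ_three]

theorem add_halfTurn_mulVec (i : ι) (w : ι → ℝ) :
    w + halfTurn i *ᵥ w = Pi.single i (2 * w i) := by
  ext j
  by_cases h : j = i
  · subst h; simp [halfTurn, mulVec_diagonal, two_mul]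
  · simp [halfTurn, mulVec_diagonal, h]

theorem permMatrix_mem_specialOrthogonalGroup {R : Type*} [CommRing R] {σ : Perm ι}
    (hσ : Perm.sign σ = 1) : σ.permMatrix R ∈ specialOrthogonalGroup ι R := by
  refine (mem_specialOrthogonalGroup_iff).2 ⟨?_, by simp [hσ]⟩
  rw [mem_orthogonalGroup_iff, transpose_permMatrix, ← permMatrix_mul, inv_mul_cancel,
    permMatrix_one]

theorem permMatrix_mulVec_single {R : Type*} [CommRing R] (σ : Perm ι) (i : ι) (r : R) :
    σ.permMatrix R *ᵥ Pi.single i r = Pi.single (σ.symm i) r := by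
  rw [permMatrix_mulVec, Pi.single_comp_equiv]

end Rotations

namespace AddSubgroup

theorem eq_top_of_isPreconnected_of_ne_zero {H : AddSubgroup ℝ}
    (hH : IsPreconnected (H : Set ℝ)) {c : ℝ} (hc : c ∈ H) (hc0 : c ≠ 0) : H = ⊤ := by
  have habs : |c| ∈ H := by
    rcases abs_choice c with h | h <;> rw [h]
    exacts [hc, neg_mem hc]
  have hpos : 0 < |c| := abs_pos.2 hc0
  have hnhds : (H : Set ℝ) ∈ 𝓝 0 :=
    Filter.mem_of_superset (Icc_mem_nhds (neg_lt_zero.2 hpos) hpos)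
      (hH.Icc_subset (neg_mem habs) habs)
  have hopen : IsOpen (H : Set ℝ) := H.isOpen_of_mem_nhds hnhds
  have huniv : (H : Set ℝ) = Set.univ :=
    IsClopen.eq_univ ⟨H.isClosed_of_isOpen hopen, hopen⟩ ⟨0, H.zero_mem⟩
  exact SetLike.coe_injective (huniv.trans coe_top.symm)

theorem surjOn_of_isPreconnected {G : Type*} [AddGroup G] [TopologicalSpace G]
    {H : AddSubgroup G} (hH : IsPreconnected (H : Set G)) {f : G →+ ℝ} (hf : Continuous f)
    {g : G} (hg : g ∈ H) (hfg : f g ≠ 0) : Set.SurjOn f H Set.univ := by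
  have htop : H.map f = ⊤ := by
    refine eq_top_of_isPreconnected_of_ne_zero ?_ (mem_map_of_mem f hg) hfg
    rw [coe_map]
    exact hH.image f hf.continuousOn
  intro t _
  exact mem_map.1 (htop ▸ mem_top t)

section RotationInvariant

variable {E : AddSubgroup (Fin 3 → ℝ)}

theorem single_mem_of_rotation_invariant
    (hrot : ∀ R ∈ specialOrthogonalGroup (Fin 3) ℝ, ∀ w ∈ E, R *ᵥ w ∈ E)
    {i : Fin 3} {r : ℝ} (h : Pi.single i r ∈ E) (j : Fin 3) : Pi.single j r ∈ E := by
  have := alternatingGroup.isPretransitive_of_three_le_card (Fin 3) (by simp)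
  obtain ⟨σ, hσ⟩ := MulAction.exists_smul_eq (alternatingGroup (Fin 3)) j i
  have hmem := hrot _ (permMatrix_mem_specialOrthogonalGroup (Perm.mem_alternatingGroup.1 σ.2)) _ h
  rwa [permMatrix_mulVec_single, ← hσ, Subgroup.smul_def, Perm.smul_def, Equiv.symm_apply_apply]
    at hmem

theorem single_two_mul_apply_mem_of_rotation_invariant
    (hrot : ∀ R ∈ specialOrthogonalGroup (Fin 3) ℝ, ∀ w ∈ E, R *ᵥ w ∈ E)
    {w : Fin 3 → ℝ} (hw : w ∈ E) (i : Fin 3) : Pi.single i (2 * w i) ∈ E :=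
  add_halfTurn_mulVec i w ▸ E.add_mem hw (hrot _ (halfTurn_mem_specialOrthogonalGroup i) w hw)

theorem eq_top_of_rotation_invariant (hE : IsPreconnected (E : Set (Fin 3 → ℝ)))
    (hrot : ∀ R ∈ specialOrthogonalGroup (Fin 3) ℝ, ∀ w ∈ E, R *ᵥ w ∈ E)
    {x : Fin 3 → ℝ} (hx : x ∈ E) (hx0 : x ≠ 0) : E = ⊤ := by
  obtain ⟨i, hi⟩ : ∃ i, x i ≠ 0 := Function.ne_iff.1 hx0
  have hsingle : ∀ j r, Pi.single j r ∈ E := by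
    intro j r
    have hj : Pi.single j (2 * x i) ∈ E := single_mem_of_rotation_invariant hrot
      (single_two_mul_apply_mem_of_rotation_invariant hrot hx i) j
    obtain ⟨w, hw, hwj⟩ := surjOn_of_isPreconnected hE
      (f := Pi.evalAddMonoidHom (fun _ => ℝ) j) (continuous_apply j) hj (by simpa using hi)
      (Set.mem_univ (r / 2))
    have hwj : w j = r / 2 := hwj
    simpa [hwj, mul_div_cancel₀] using single_two_mul_apply_mem_of_rotation_invariant hrot hw j
  refine (eq_top_iff' E).2 fun w => ?_
  rw [← Finset.univ_sum_single w]
  exact sum_mem fun j _ => hsingle j (w j)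

end RotationInvariant

theorem eq_top_of_boost_invariant {V : Type*} [AddCommGroup V] [Module ℝ V]
    [TopologicalSpace V] {H : AddSubgroup (ℝ × V)} (hH : IsPreconnected (H : Set (ℝ × V)))
    (hboost : ∀ d ∈ H, ∀ v : V, (d.1, d.2 + d.1 • v) ∈ H) {d : ℝ × V} (hd : d ∈ H)
    (hd0 : d.1 ≠ 0) : H = ⊤ := by
  have hspace : ∀ u : V, ((0 : ℝ), u) ∈ H := by
    intro u
    have hdiff : (d.1, d.2 + d.1 • d.1⁻¹ • u) - d = (0, u) := by
      ext <;> simp [smul_smul, hd0]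
    exact hdiff ▸ H.sub_mem (hboost d hd (d.1⁻¹ • u)) hd
  refine (eq_top_iff' H).2 fun p => ?_
  obtain ⟨g, hg, hg1⟩ := surjOn_of_isPreconnected hH (f := AddMonoidHom.fst ℝ V) continuous_fst
    hd hd0 (Set.mem_univ p.1)
  have hp : g + (0, p.2 - g.2) = p := by
    ext
    · simpa using hg1
    · simp
  exact hp ▸ H.add_mem hg (hspace _)

theorem eq_ker_fst_of_galilei_invariant {H : AddSubgroup (ℝ × (Fin 3 → ℝ))}
    (hH : IsPreconnected (H : Set (ℝ × (Fin 3 → ℝ))))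
    (hboost : ∀ d ∈ H, ∀ v : Fin 3 → ℝ, (d.1, d.2 + d.1 • v) ∈ H)
    (hrot : ∀ R ∈ specialOrthogonalGroup (Fin 3) ℝ, ∀ d ∈ H, (d.1, R *ᵥ d.2) ∈ H)
    (hbot : H ≠ ⊥) (htop : H ≠ ⊤) : H = (AddMonoidHom.fst ℝ (Fin 3 → ℝ)).ker := by
  have htime : ∀ d ∈ H, d.1 = 0 := fun d hd =>
    by_contra fun h => htop (H.eq_top_of_boost_invariant hH hboost hd h)
  have hspace : ∀ {d}, d ∈ H → ((0 : ℝ), d.2) ∈ H := fun {d} hd => by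
    rwa [← htime d hd]
  set E := H.comap (AddMonoidHom.inr ℝ (Fin 3 → ℝ))
  have hE : (E : Set (Fin 3 → ℝ)) = Prod.snd '' (H : Set (ℝ × (Fin 3 → ℝ))) := by
    ext u
    refine ⟨fun hu => ⟨(0, u), hu, rfl⟩, ?_⟩
    rintro ⟨d, hd, rfl⟩
    exact hspace hd
  obtain ⟨d, hd, hd0⟩ := H.bot_or_exists_ne_zero.resolve_left hbot
  have hEtop : E = ⊤ := by
    refine eq_top_of_rotation_invariant (hE ▸ hH.image _ continuous_snd.continuousOn)
      (fun R hR w hw => hrot R hR _ hw) (x := d.2) (hspace hd) fun h => hd0 ?_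
    exact Prod.ext (htime d hd) h
  ext d
  refine ⟨htime d, fun hd1 => ?_⟩
  have hd2 : ((0 : ℝ), d.2) ∈ H := (hEtop ▸ mem_top d.2 : d.2 ∈ E)
  rwa [← show d.1 = 0 from hd1] at hd2

end AddSubgroup

theorem galAct_translation (a : Fin 3 → ℝ) (b : ℝ) (p : ℝ × (Fin 3 → ℝ)) :
    galAct 1 0 a b p = p + (b, a) := by
  ext <;> simp [galAct]

theorem galAct_boost (v : Fin 3 → ℝ) (p : ℝ × (Fin 3 → ℝ)) :
    galAct 1 v 0 0 p = (p.1, p.2 + p.1 • v) := by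
  simp [galAct]

theorem galAct_rotation (R : Matrix (Fin 3) (Fin 3) ℝ) (p : ℝ × (Fin 3 → ℝ)) :
    galAct R 0 0 0 p = (p.1, R *ᵥ p.2) := by
  simp [galAct]

/-- A non-trivial `IGal`-invariant equivalence relation on spacetime with
connected equivalence classes is exactly the relation of equal time
coordinate (standard Galilean simultaneity). -/
theorem IGal_invariant_connected_classes_eq_time
    (S : Setoid (ℝ × (Fin 3 → ℝ)))
    (hinv : ∀ (R : Matrix (Fin 3) (Fin 3) ℝ), R ∈ Matrix.specialOrthogonalGroup (Fin 3) ℝ →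
      ∀ (v a : Fin 3 → ℝ) (b : ℝ) (p q : ℝ × (Fin 3 → ℝ)),
        S.r p q ↔ S.r (galAct R v a b p) (galAct R v a b q))
    (hne : ∃ p q, p ≠ q ∧ S.r p q) (hnt : ∃ p q, ¬ S.r p q)
    (hconn : ∀ p : ℝ × (Fin 3 → ℝ), IsConnected {q | S.r p q}) :
    ∀ p q : ℝ × (Fin 3 → ℝ), S.r p q ↔ p.1 = q.1 := by
  have hgal R hR v a b p q := (hinv R hR v a b p q).1
  have htransl : ∀ a p q, S.r p q → S.r (p + a) (q + a) := fun a p q h => by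
    simpa only [galAct_translation] using hgal 1 (one_mem _) 0 a.2 a.1 p q h
  have hH : S.zeroClass htransl = (AddMonoidHom.fst ℝ (Fin 3 → ℝ)).ker := by
    refine AddSubgroup.eq_ker_fst_of_galilei_invariant (hconn 0).isPreconnected ?_ ?_ ?_ ?_
    · intro d hd v
      rw [← galAct_boost]
      exact S.map_mem_zeroClass htransl (by simp [galAct_boost]) (hgal 1 (one_mem _) v 0 0) hd
    · intro R hR d hd
      rw [← galAct_rotation]
      exact S.map_mem_zeroClass htransl (by simp [galAct_rotation]) (hgal R hR 0 0 0) hd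
    · obtain ⟨p, q, hpq, hrel⟩ := hne
      exact AddSubgroup.ne_bot_iff_exists_ne_zero.2 ⟨⟨q - p,
        (S.rel_iff_sub_mem_zeroClass htransl).1 hrel⟩, by simpa [sub_eq_zero] using hpq.symm⟩
    · obtain ⟨p, q, hpq⟩ := hnt
      exact fun htop => hpq ((S.rel_iff_sub_mem_zeroClass htransl).2 (htop ▸ AddSubgroup.mem_top _))
  intro p q
  rw [S.rel_iff_sub_mem_zeroClass htransl, hH, AddMonoidHom.mem_ker, AddMonoidHom.coe_fst,
    Prod.fst_sub, sub_eq_zero, eq_comm]
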